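/- In the setup (no conservation law needed), for every state ρ on A: √𝔉_{ρ⊗ρ_B}(X_A⊗1_B − U†(X_{A'}⊗1_{B'})U) ≤ √𝔉_ρ(Y) + √𝔉_{ρ⊗ρ_B}(E†(X_{A'})⊗1_B − U†(X_{A'}⊗1_{B'})U), where E(τ) := Tr_{B'}[U(τ⊗ρ_B)U†], E† is its dual, and Y := X_A − E†(X_{A'}). -/

import Mathlib

open scoped Kronecker
open Matrix
open scoped ComplexOrder Classical

noncomputable section

/-- Positive semidefinite square root of a matrix (junk value `0` if not PSD). -/
noncomputable def matSqrt {n : Type*} [Fintype n] [DecidableEq n]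
    (A : Matrix n n ℂ) : Matrix n n ℂ :=
  if h : A.PosSemidef then
    (h.1.eigenvectorUnitary : Matrix n n ℂ) *
      Matrix.diagonal ((↑) ∘ (Real.sqrt ·) ∘ h.1.eigenvalues) *
      (star h.1.eigenvectorUnitary : Matrix n n ℂ)
  else 0

/-- A quantum state: a positive semidefinite matrix of unit trace. -/
def IsState {n : Type*} [Fintype n] [DecidableEq n] (ρ : Matrix n n ℂ) : Prop :=
  ρ.PosSemidef ∧ ρ.trace = 1

/-- Fidelity `F(ρ,σ) = Tr √(√σ ρ √σ)`. -/
noncomputable def fidelity {n : Type*} [Fintype n] [DecidableEq n]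
    (ρ σ : Matrix n n ℂ) : ℝ :=
  ((matSqrt (matSqrt σ * ρ * matSqrt σ)).trace).re

/-- Purified distance `D_F(ρ,σ) = √(1 − F(ρ,σ)²)`. -/
noncomputable def purifiedDist {n : Type*} [Fintype n] [DecidableEq n]
    (ρ σ : Matrix n n ℂ) : ℝ :=
  Real.sqrt (1 - (fidelity ρ σ) ^ 2)

/-- SLD quantum Fisher information
`𝔉_ρ(X) = 2 ∑_{i,j : λ_i+λ_j>0} ((λ_i−λ_j)²/(λ_i+λ_j)) |⟨i|X|j⟩|²`
(junk value `0` if `ρ` is not Hermitian). -/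
noncomputable def qFisher {n : Type*} [Fintype n] [DecidableEq n]
    (ρ X : Matrix n n ℂ) : ℝ :=
  if hρ : ρ.IsHermitian then
    2 * ∑ i, ∑ j,
      (if 0 < hρ.eigenvalues i + hρ.eigenvalues j then
        ((hρ.eigenvalues i - hρ.eigenvalues j) ^ 2 / (hρ.eigenvalues i + hρ.eigenvalues j)) *
          Complex.normSq (dotProduct (star ⇑(hρ.eigenvectorBasis i))
            (X *ᵥ ⇑(hρ.eigenvectorBasis j)))
      else 0)
  else 0

/-- Positive part of a Hermitian matrix (junk value `0` if not Hermitian). -/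
noncomputable def matPosPart {n : Type*} [Fintype n] [DecidableEq n]
    (W : Matrix n n ℂ) : Matrix n n ℂ :=
  if hW : W.IsHermitian then
    (hW.eigenvectorUnitary : Matrix n n ℂ) *
      Matrix.diagonal (fun i => ((max (hW.eigenvalues i) 0 : ℝ) : ℂ)) *
      star (hW.eigenvectorUnitary : Matrix n n ℂ)
  else 0

/-- Negative part of a Hermitian matrix (junk value `0` if not Hermitian). -/
noncomputable def matNegPart {n : Type*} [Fintype n] [DecidableEq n]
    (W : Matrix n n ℂ) : Matrix n n ℂ :=
  if hW : W.IsHermitian then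
    (hW.eigenvectorUnitary : Matrix n n ℂ) *
      Matrix.diagonal (fun i => ((max (-hW.eigenvalues i) 0 : ℝ) : ℂ)) *
      star (hW.eigenvectorUnitary : Matrix n n ℂ)
  else 0

/-- `Δ_W`: difference between the largest and smallest eigenvalues of a Hermitian matrix. -/
noncomputable def specSpread {n : Type*} [Fintype n] [DecidableEq n]
    (W : Matrix n n ℂ) : ℝ :=
  if hW : W.IsHermitian then (⨆ i, hW.eigenvalues i) - (⨅ i, hW.eigenvalues i) else 0

/-- Trace distance `T(ρ,σ) = ½(Tr (ρ−σ)₊ + Tr (ρ−σ)₋)`. -/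
noncomputable def traceDist {n : Type*} [Fintype n] [DecidableEq n]
    (ρ σ : Matrix n n ℂ) : ℝ :=
  (((matPosPart (ρ - σ)).trace).re + ((matNegPart (ρ - σ)).trace).re) / 2

/-- The dual (adjoint w.r.t. the trace pairing) of a linear map on matrices:
`Tr[(dualMap Φ W) ρ] = Tr[W Φ(ρ)]` for all `ρ` whenever `Φ` is linear. -/
noncomputable def dualMap {n m : Type*} [Fintype n] [DecidableEq n] [Fintype m] [DecidableEq m]
    (Φ : Matrix n n ℂ → Matrix m m ℂ) (W : Matrix m m ℂ) : Matrix n n ℂ :=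
  Matrix.of fun i j => (W * Φ (Matrix.single j i 1)).trace

/-- Partial trace over the second tensor factor. -/
def ptraceRight {α β : Type*} [Fintype β] (M : Matrix (α × β) (α × β) ℂ) : Matrix α α ℂ :=
  Matrix.of fun i j => ∑ k, M (i, k) (j, k)

/-- Partial trace over the first tensor factor. -/
def ptraceLeft {α β : Type*} [Fintype α] (M : Matrix (α × β) (α × β) ℂ) : Matrix β β ℂ :=
  Matrix.of fun i j => ∑ k, M (k, i) (k, j)

/-- A quantum channel: a map admitting a Kraus representation `{K_μ}` with
`∑_μ K_μ† K_μ = 1` (this entails complete positivity, trace preservation and linearity). -/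
def IsCPTP {n m : Type*} [Fintype n] [DecidableEq n] [Fintype m] [DecidableEq m]
    (Φ : Matrix n n ℂ → Matrix m m ℂ) : Prop :=
  ∃ (N : ℕ) (K : Fin N → Matrix m n ℂ),
    (∀ ρ, Φ ρ = ∑ μ, K μ * ρ * (K μ)ᴴ) ∧ (∑ μ, (K μ)ᴴ * K μ = 1)

/-- Tensor extension `Φ ⊗ id` of a map on matrices (correct for linear `Φ`). -/
noncomputable def tensorId {a b r : Type*} [Fintype a] [DecidableEq a]
    [Fintype b] [DecidableEq b] [Fintype r]
    (Φ : Matrix a a ℂ → Matrix b b ℂ)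
    (M : Matrix (a × r) (a × r) ℂ) : Matrix (b × r) (b × r) ℂ :=
  Matrix.of fun p q => Φ (Matrix.of fun i j => M (i, p.2) (j, q.2)) p.1 q.1

/-- Operator norm (ℓ²→ℓ²) of a matrix, as a supremum over unit vectors. -/
noncomputable def opNorm {n : Type*} [Fintype n] (M : Matrix n n ℂ) : ℝ :=
  sSup {x : ℝ | ∃ v : n → ℂ, (∑ i, Complex.normSq (v i)) = 1 ∧
    x = Real.sqrt (∑ i, Complex.normSq ((M *ᵥ v) i))}

end

/-! √𝔉_σ is a seminorm in the observable: in an eigenbasis of σ it is a weighted ℓ² norm of the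
matrix entries. The observable on the left splits as
`Y ⊗ 1 + (E†(X_{A'}) ⊗ 1 − U†(X_{A'} ⊗ 1)U)`, so the triangle inequality applies, and it remains
to see `𝔉_{ρ⊗ρ_B}(Y ⊗ 1) = 𝔉_ρ(Y)`. In the product eigenbasis the weights are homogeneous in the
eigenvalues of ρ_B, which sum to 1. As `qFisher` is evaluated in whatever eigenbasis the spectral
theorem returns, this also needs the independence of the spectral formula from the eigenbasis,
which follows from the variational formula `𝔉_ρ(X) = max_L (4 Re Tr(i[ρ,X]L) − 4 Tr(ρL²))`. -/

noncomputable section FisherForm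

variable {n : Type*} [Fintype n]

def fisherWeight (a b : ℝ) : ℝ := if 0 < a + b then (a - b) ^ 2 / (a + b) else 0

lemma fisherWeight_nonneg (a b : ℝ) : 0 ≤ fisherWeight a b := by
  unfold fisherWeight
  split_ifs
  · positivity
  · rfl

lemma fisherWeight_mul_right (a b : ℝ) {c : ℝ} (hc : 0 ≤ c) :
    fisherWeight (a * c) (b * c) = c * fisherWeight a b := by
  rcases hc.eq_or_lt with rfl | hc
  · simp [fisherWeight]
  · simp only [fisherWeight, ← add_mul, mul_pos_iff_of_pos_right hc, ← sub_mul]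
    split_ifs
    · field_simp
    · rw [mul_zero]

/-- The Fisher information in an eigenbasis: `d` are the eigenvalues and `M` the matrix of the
observable in that basis. -/
def fisherForm (d : n → ℝ) (M : Matrix n n ℂ) : ℝ :=
  2 * ∑ i, ∑ j, fisherWeight (d i) (d j) * Complex.normSq (M i j)

lemma sqrt_fisherForm_add_le (d : n → ℝ) (A B : Matrix n n ℂ) :
    √(fisherForm d (A + B)) ≤ √(fisherForm d A) + √(fisherForm d B) := by
  let v : Matrix n n ℂ → EuclideanSpace ℂ (n × n) := fun M =>
    WithLp.toLp 2 fun p => (√(fisherWeight (d p.1) (d p.2)) : ℂ) * M p.1 p.2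
  have hv : ∀ M, √(fisherForm d M) = √2 * ‖v M‖ := fun M => by
    rw [← Real.sqrt_sq (norm_nonneg (v M)), ← Real.sqrt_mul zero_le_two,
      EuclideanSpace.norm_sq_eq, Fintype.sum_prod_type]
    simp only [fisherForm, v, norm_mul, Complex.norm_real, Real.norm_eq_abs, mul_pow, sq_abs,
      Real.sq_sqrt (fisherWeight_nonneg _ _), Complex.sq_norm]
  have hadd : v (A + B) = v A + v B := by
    ext p
    simp [v, mul_add]
  rw [hv, hv, hv, hadd, ← mul_add]
  exact mul_le_mul_of_nonneg_left (norm_add_le _ _) (Real.sqrt_nonneg 2)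

end FisherForm

section QFisher

variable {n : Type*} [Fintype n] [DecidableEq n]

lemma qFisher_eq_fisherForm {ρ : Matrix n n ℂ} (hρ : ρ.IsHermitian) (X : Matrix n n ℂ) :
    qFisher ρ X = fisherForm hρ.eigenvalues
      (star (hρ.eigenvectorUnitary : Matrix n n ℂ) * X * hρ.eigenvectorUnitary) := by
  rw [qFisher, dif_pos hρ, fisherForm]
  congr 1
  refine Finset.sum_congr rfl fun i _ => Finset.sum_congr rfl fun j _ => ?_
  rw [fisherWeight, ite_mul, zero_mul, Matrix.mul_assoc]
  simp only [dotProduct, Matrix.mul_apply, Matrix.mulVec, Matrix.star_apply,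
    Matrix.IsHermitian.eigenvectorUnitary_apply, Pi.star_apply, Finset.mul_sum]

lemma sqrt_qFisher_add_le (ρ A B : Matrix n n ℂ) :
    √(qFisher ρ (A + B)) ≤ √(qFisher ρ A) + √(qFisher ρ B) := by
  by_cases hρ : ρ.IsHermitian
  · simp only [qFisher_eq_fisherForm hρ, Matrix.mul_add, Matrix.add_mul]
    exact sqrt_fisherForm_add_le _ _ _
  · simp [qFisher, dif_neg hρ]

end QFisher

noncomputable section SLDTerm

open ComplexConjugate

def sldTerm (a b : ℝ) (z w : ℂ) : ℝ :=
  4 * ((a - b) * (Complex.I * (z * conj w)).re) - 2 * ((a + b) * Complex.normSq w)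

def sldOptimal (a b : ℝ) (z : ℂ) : ℂ :=
  if 0 < a + b then Complex.I * ((a - b : ℝ) : ℂ) * z / ((a + b : ℝ) : ℂ) else 0

lemma sldTerm_le {a b : ℝ} (ha : 0 ≤ a) (hb : 0 ≤ b) (z w : ℂ) :
    sldTerm a b z w ≤ 2 * (fisherWeight a b * Complex.normSq z) := by
  have hr : (a - b) * (Complex.I * (z * conj w)).re ≤ |a - b| * (‖z‖ * ‖w‖) := by
    calc (a - b) * (Complex.I * (z * conj w)).re ≤ |(a - b) * (Complex.I * (z * conj w)).re| :=
          le_abs_self _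
      _ ≤ |a - b| * (‖z‖ * ‖w‖) := by
          rw [abs_mul]
          gcongr
          simpa using Complex.abs_re_le_norm (Complex.I * (z * conj w))
  rw [sldTerm, fisherWeight, ← Complex.sq_norm, ← Complex.sq_norm]
  split_ifs with hab
  · rw [div_mul_eq_mul_div, ← mul_div_assoc, le_div_iff₀ hab]
    -- AM-GM: `2 (|a - b| ‖z‖) ((a + b) ‖w‖) ≤ (a - b)² ‖z‖² + (a + b)² ‖w‖²`
    nlinarith [sq_nonneg (|a - b| * ‖z‖ - (a + b) * ‖w‖), sq_abs (a - b),
      mul_le_mul_of_nonneg_left hr hab.le]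
  · obtain ⟨rfl, rfl⟩ : a = 0 ∧ b = 0 := by constructor <;> linarith
    simp

lemma sldTerm_sldOptimal (a b : ℝ) (z : ℂ) :
    sldTerm a b z (sldOptimal a b z) = 2 * (fisherWeight a b * Complex.normSq z) := by
  unfold sldTerm sldOptimal fisherWeight
  split_ifs with hab
  · have hab' : ((a + b : ℝ) : ℂ) ≠ 0 := Complex.ofReal_ne_zero.mpr hab.ne'
    have hre : Complex.I * (z * conj (Complex.I * ((a - b : ℝ) : ℂ) * z / ((a + b : ℝ) : ℂ)))
        = (((a - b) * Complex.normSq z / (a + b) : ℝ) : ℂ) := by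
      rw [map_div₀, map_mul, map_mul, Complex.conj_I, Complex.conj_ofReal, Complex.conj_ofReal,
        Complex.ofReal_div, Complex.ofReal_mul, ← Complex.mul_conj]
      field_simp
      linear_combination (-((a - b : ℝ) : ℂ) * (z * conj z)) * Complex.I_sq
    rw [hre, Complex.ofReal_re, map_div₀, map_mul, map_mul, Complex.normSq_I,
      Complex.normSq_ofReal, Complex.normSq_ofReal]
    field_simp
    ring
  · simp

lemma isHermitian_sldOptimal {n : Type*} (d : n → ℝ) {M : Matrix n n ℂ} (hM : M.IsHermitian) :
    (Matrix.of fun i j => sldOptimal (d i) (d j) (M i j)).IsHermitian := by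
  refine Matrix.IsHermitian.ext fun i j => ?_
  simp only [Matrix.of_apply, sldOptimal, add_comm (d j)]
  split_ifs
  · rw [← hM.apply i j]
    simp only [star_div₀, star_mul', Complex.star_def, Complex.conj_I, Complex.conj_ofReal]
    push_cast
    ring
  · exact star_zero _

end SLDTerm

noncomputable section Variational

open ComplexConjugate

variable {n : Type*} [Fintype n] [DecidableEq n]

def sldFunctional (ρ X L : Matrix n n ℂ) : ℝ :=
  4 * (Complex.I * ((ρ * X - X * ρ) * L).trace).re - 4 * (ρ * (L * L)).trace.re

lemma sldFunctional_diagonal (d : n → ℝ) (M : Matrix n n ℂ) {K : Matrix n n ℂ}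
    (hK : K.IsHermitian) :
    sldFunctional (Matrix.diagonal ((↑) ∘ d)) M K
      = ∑ i, ∑ j, sldTerm (d i) (d j) (M i j) (K i j) := by
  have hKc : ∀ i j, K j i = conj (K i j) := fun i j => (hK.apply j i).symm
  set D : Matrix n n ℂ := Matrix.diagonal ((↑) ∘ d)
  have hcomm : (Complex.I * ((D * M - M * D) * K).trace).re
      = ∑ i, ∑ j, (d i - d j) * (Complex.I * (M i j * conj (K i j))).re := by
    simp only [D, Matrix.trace, Matrix.diag, Matrix.mul_apply (M := D * M - M * D),
      Matrix.sub_apply, Matrix.diagonal_mul, Matrix.mul_diagonal, Function.comp_apply,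
      Finset.mul_sum, Complex.re_sum]
    refine Finset.sum_congr rfl fun i _ => Finset.sum_congr rfl fun j _ => ?_
    rw [hKc, ← Complex.re_ofReal_mul]
    push_cast
    ring_nf
  have hsq : (D * (K * K)).trace.re = ∑ i, ∑ j, d i * Complex.normSq (K i j) := by
    simp only [D, Matrix.trace, Matrix.diag, Matrix.diagonal_mul, Matrix.mul_apply (M := K),
      Function.comp_apply, Finset.mul_sum, Complex.re_sum]
    refine Finset.sum_congr rfl fun i _ => Finset.sum_congr rfl fun j _ => ?_
    rw [hKc i j, Complex.mul_conj, ← Complex.ofReal_mul, Complex.ofReal_re]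
  have hsymm : ∑ i, ∑ j, d i * Complex.normSq (K i j) = ∑ i, ∑ j, d j * Complex.normSq (K i j) := by
    rw [Finset.sum_comm]
    refine Finset.sum_congr rfl fun i _ => Finset.sum_congr rfl fun j _ => ?_
    rw [hKc, Complex.normSq_conj]
  have hterms : ∑ i, ∑ j, sldTerm (d i) (d j) (M i j) (K i j)
      = 4 * ∑ i, ∑ j, (d i - d j) * (Complex.I * (M i j * conj (K i j))).re
        - 2 * (∑ i, ∑ j, d i * Complex.normSq (K i j)
          + ∑ i, ∑ j, d j * Complex.normSq (K i j)) := by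
    simp only [sldTerm, Finset.sum_sub_distrib, Finset.mul_sum, mul_add, add_mul,
      Finset.sum_add_distrib]
  rw [sldFunctional, hcomm, hsq, hterms, ← hsymm]
  ring

lemma trace_unitary_conj (u : unitary (Matrix n n ℂ)) (N : Matrix n n ℂ) :
    ((u : Matrix n n ℂ) * N * star (u : Matrix n n ℂ)).trace = N.trace := by
  rw [Matrix.trace_mul_cycle, Unitary.star_mul_self_of_mem u.prop, Matrix.one_mul]

lemma sldFunctional_conjStarAlgAut (u : unitary (Matrix n n ℂ)) (ρ X L : Matrix n n ℂ) :
    sldFunctional (Unitary.conjStarAlgAut ℂ _ u ρ) (Unitary.conjStarAlgAut ℂ _ u X)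
      (Unitary.conjStarAlgAut ℂ _ u L) = sldFunctional ρ X L := by
  simp only [sldFunctional, ← map_mul, ← map_sub]
  simp only [Unitary.conjStarAlgAut_apply, trace_unitary_conj]

theorem isGreatest_sldFunctional {ρ X : Matrix n n ℂ} (hX : X.IsHermitian)
    (u : unitary (Matrix n n ℂ)) {d : n → ℝ} (hd : ∀ i, 0 ≤ d i)
    (hρ : ρ = (u : Matrix n n ℂ) * Matrix.diagonal ((↑) ∘ d) * star (u : Matrix n n ℂ)) :
    IsGreatest (sldFunctional ρ X '' {L | L.IsHermitian})
      (fisherForm d (star (u : Matrix n n ℂ) * X * u)) := by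
  set φ := Unitary.conjStarAlgAut ℂ (Matrix n n ℂ) u
  set M := star (u : Matrix n n ℂ) * X * u
  have hφ : ∀ L, sldFunctional ρ X (φ L) = sldFunctional (Matrix.diagonal ((↑) ∘ d)) M L := by
    intro L
    have hXM : X = φ M := (φ.apply_symm_apply X).symm
    have hρφ : ρ = φ (Matrix.diagonal ((↑) ∘ d)) := by simp [φ, hρ]
    rw [hρφ, hXM, sldFunctional_conjStarAlgAut]
  have hM : M.IsHermitian := Matrix.isHermitian_conjTranspose_mul_mul (u : Matrix n n ℂ) hX
  set K := Matrix.of fun i j => sldOptimal (d i) (d j) (M i j)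
  have hK : K.IsHermitian := isHermitian_sldOptimal d hM
  constructor
  · refine ⟨φ K, ?_, ?_⟩
    · simpa [φ, Matrix.star_eq_conjTranspose] using
        Matrix.isHermitian_mul_mul_conjTranspose (u : Matrix n n ℂ) hK
    · rw [hφ, sldFunctional_diagonal d M hK, fisherForm, Finset.mul_sum]
      refine Finset.sum_congr rfl fun i _ => ?_
      rw [Finset.mul_sum]
      exact Finset.sum_congr rfl fun j _ => sldTerm_sldOptimal _ _ _
  · rintro _ ⟨L, hL, rfl⟩
    have hL' : (φ.symm L).IsHermitian := by
      simpa [φ, Unitary.conjStarAlgAut_symm_apply, Matrix.star_eq_conjTranspose] using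
        Matrix.isHermitian_conjTranspose_mul_mul (u : Matrix n n ℂ) hL
    rw [← φ.apply_symm_apply L, hφ, sldFunctional_diagonal d M hL', fisherForm, Finset.mul_sum]
    refine Finset.sum_le_sum fun i _ => ?_
    rw [Finset.mul_sum]
    exact Finset.sum_le_sum fun j _ => sldTerm_le (hd i) (hd j) _ _

theorem qFisher_eq_fisherForm_of_eq_conj {ρ X : Matrix n n ℂ} (hX : X.IsHermitian)
    (u : unitary (Matrix n n ℂ)) {d : n → ℝ} (hd : ∀ i, 0 ≤ d i)
    (hρ : ρ = (u : Matrix n n ℂ) * Matrix.diagonal ((↑) ∘ d) * star (u : Matrix n n ℂ)) :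
    qFisher ρ X = fisherForm d (star (u : Matrix n n ℂ) * X * u) := by
  have hD : (Matrix.diagonal ((↑) ∘ d) : Matrix n n ℂ).PosSemidef :=
    Matrix.posSemidef_diagonal_iff.mpr fun i => by simpa using hd i
  have hρ_psd : ρ.PosSemidef := hρ ▸ hD.mul_mul_conjTranspose_same _
  have hspec := hρ_psd.1.spectral_theorem
  simp only [Unitary.conjStarAlgAut_apply] at hspec
  rw [qFisher_eq_fisherForm hρ_psd.1]
  exact (isGreatest_sldFunctional hX _ hρ_psd.eigenvalues_nonneg hspec).unique
    (isGreatest_sldFunctional hX u hd hρ)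

theorem Matrix.PosSemidef.exists_eq_unitary_conj_diagonal {ρ : Matrix n n ℂ} (hρ : ρ.PosSemidef) :
    ∃ (u : unitary (Matrix n n ℂ)) (d : n → ℝ), (∀ i, 0 ≤ d i) ∧
      ρ = (u : Matrix n n ℂ) * Matrix.diagonal ((↑) ∘ d) * star (u : Matrix n n ℂ) :=
  ⟨_, _, hρ.eigenvalues_nonneg, hρ.1.spectral_theorem⟩

end Variational

section Kronecker

variable {α β : Type*} [Fintype α] [Fintype β] [DecidableEq β]

lemma fisherForm_kronecker_one (d : α → ℝ) {m : β → ℝ} (hm : ∀ k, 0 ≤ m k) (M : Matrix α α ℂ) :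
    fisherForm (fun p : α × β => d p.1 * m p.2) (M ⊗ₖ (1 : Matrix β β ℂ))
      = (∑ k, m k) * fisherForm d M := by
  have hdiag : ∀ i k j, ∑ l, fisherWeight (d i * m k) (d j * m l) *
      Complex.normSq ((M ⊗ₖ (1 : Matrix β β ℂ)) (i, k) (j, l))
      = m k * (fisherWeight (d i) (d j) * Complex.normSq (M i j)) := by
    intro i k j
    rw [Finset.sum_eq_single k (fun l _ hl => by simp [Matrix.one_apply_ne' hl]) (by simp),
      Matrix.kroneckerMap_apply, Matrix.one_apply_eq, mul_one, fisherWeight_mul_right _ _ (hm k),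
      mul_assoc]
  simp only [fisherForm, Fintype.sum_prod_type, hdiag, Finset.mul_sum]
  refine Finset.sum_congr rfl fun i _ => ?_
  rw [Finset.sum_comm]
  refine Finset.sum_congr rfl fun j _ => ?_
  rw [Finset.sum_mul]
  exact Finset.sum_congr rfl fun k _ => by ring

variable [DecidableEq α]

theorem qFisher_kronecker_one {ρ : Matrix α α ℂ} {σ : Matrix β β ℂ} (hρ : ρ.PosSemidef)
    (hσ : σ.PosSemidef) (hσ_tr : σ.trace = 1) {Y : Matrix α α ℂ} (hY : Y.IsHermitian) :
    qFisher (ρ ⊗ₖ σ) (Y ⊗ₖ (1 : Matrix β β ℂ)) = qFisher ρ Y := by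
  obtain ⟨V, d, hd, hρV⟩ := hρ.exists_eq_unitary_conj_diagonal
  obtain ⟨W, m, hm, hσW⟩ := hσ.exists_eq_unitary_conj_diagonal
  let u : unitary (Matrix (α × β) (α × β) ℂ) :=
    ⟨(V : Matrix α α ℂ) ⊗ₖ (W : Matrix β β ℂ), Matrix.kronecker_mem_unitary (R := ℂ) V.2 W.2⟩
  have hstar : star (u : Matrix (α × β) (α × β) ℂ)
      = star (V : Matrix α α ℂ) ⊗ₖ star (W : Matrix β β ℂ) :=
    Matrix.conjTranspose_kronecker _ _
  have hspec : ρ ⊗ₖ σ = (u : Matrix (α × β) (α × β) ℂ)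
      * Matrix.diagonal ((↑) ∘ fun p => d p.1 * m p.2) * star (u : Matrix (α × β) (α × β) ℂ) := by
    rw [hstar, hρV, hσW, Matrix.mul_kronecker_mul, Matrix.mul_kronecker_mul,
      Matrix.diagonal_kronecker_diagonal]
    simp [u, Function.comp_def]
  have hconj : star (u : Matrix (α × β) (α × β) ℂ) * (Y ⊗ₖ (1 : Matrix β β ℂ))
      * (u : Matrix (α × β) (α × β) ℂ)
      = (star (V : Matrix α α ℂ) * Y * (V : Matrix α α ℂ)) ⊗ₖ (1 : Matrix β β ℂ) := by
    rw [hstar, ← Matrix.mul_kronecker_mul, Matrix.mul_one, ← Matrix.mul_kronecker_mul,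
      Unitary.star_mul_self_of_mem W.2]
  have hYk : (Y ⊗ₖ (1 : Matrix β β ℂ)).IsHermitian := by
    rw [Matrix.IsHermitian, Matrix.conjTranspose_kronecker, hY.eq, Matrix.conjTranspose_one]
  have hm_sum : ∑ k, m k = 1 := by
    rw [hσW, trace_unitary_conj, Matrix.trace_diagonal] at hσ_tr
    simp only [Function.comp_apply, ← Complex.ofReal_sum] at hσ_tr
    exact_mod_cast hσ_tr
  rw [qFisher_eq_fisherForm_of_eq_conj hYk u (fun p => mul_nonneg (hd p.1) (hm p.2)) hspec, hconj,
    fisherForm_kronecker_one _ hm, hm_sum, one_mul, qFisher_eq_fisherForm_of_eq_conj hY V hd hρV]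

end Kronecker

lemma Matrix.sub_kronecker {l m n p R : Type*} [NonUnitalNonAssocRing R] (A₁ A₂ : Matrix l m R)
    (B : Matrix n p R) :
    (A₁ - A₂) ⊗ₖ B = A₁ ⊗ₖ B - A₂ ⊗ₖ B := by
  ext
  simp [sub_mul]

lemma ptraceRight_conjTranspose {α β : Type*} [Fintype β] (M : Matrix (α × β) (α × β) ℂ) :
    ptraceRight Mᴴ = (ptraceRight M)ᴴ := by
  ext i j
  simp [ptraceRight, star_sum]

lemma isHermitian_dualMap {n m : Type*} [Fintype n] [DecidableEq n] [Fintype m] [DecidableEq m]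
    {Φ : Matrix n n ℂ → Matrix m m ℂ} (hΦ : ∀ M, Φ Mᴴ = (Φ M)ᴴ) {W : Matrix m m ℂ}
    (hW : W.IsHermitian) : (dualMap Φ W).IsHermitian := by
  ext i j
  simp only [Matrix.conjTranspose_apply, dualMap, Matrix.of_apply]
  rw [← Matrix.trace_conjTranspose, Matrix.conjTranspose_mul, ← hΦ, Matrix.conjTranspose_single,
    star_one, hW.eq, Matrix.trace_mul_comm]

theorem statement_8_general
    {dA dB dA' dB' : Type*} [Fintype dA] [DecidableEq dA] [Fintype dB] [DecidableEq dB]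
    [Fintype dA'] [DecidableEq dA'] [Fintype dB'] [DecidableEq dB']
    (e : dA × dB ≃ dA' × dB')
    (U : Matrix (dA × dB) (dA × dB) ℂ)
    (ρB : Matrix dB dB ℂ) (hρB : IsState ρB)
    (XA : Matrix dA dA ℂ) (hXA : XA.IsHermitian)
    (XA' : Matrix dA' dA' ℂ) (hXA' : XA'.IsHermitian)
    (Emap : Matrix dA dA ℂ → Matrix dA' dA' ℂ)
    (hE : ∀ τ, Emap τ = ptraceRight (Matrix.reindex e e (U * (τ ⊗ₖ ρB) * Uᴴ)))
    (Y : Matrix dA dA ℂ) (hY : Y = XA - dualMap Emap XA')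
    (ρ : Matrix dA dA ℂ) (hρ : IsState ρ) :
    Real.sqrt (qFisher (ρ ⊗ₖ ρB)
        (XA ⊗ₖ (1 : Matrix dB dB ℂ)
          - Uᴴ * (Matrix.reindex e.symm e.symm (XA' ⊗ₖ (1 : Matrix dB' dB' ℂ))) * U))
      ≤ Real.sqrt (qFisher ρ Y)
        + Real.sqrt (qFisher (ρ ⊗ₖ ρB)
            ((dualMap Emap XA') ⊗ₖ (1 : Matrix dB dB ℂ)
              - Uᴴ * (Matrix.reindex e.symm e.symm (XA' ⊗ₖ (1 : Matrix dB' dB' ℂ))) * U)) := by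
  have hE_star : ∀ τ, Emap τᴴ = (Emap τ)ᴴ := fun τ => by
    rw [hE, hE, ← ptraceRight_conjTranspose, Matrix.conjTranspose_reindex,
      Matrix.conjTranspose_mul, Matrix.conjTranspose_mul, Matrix.conjTranspose_conjTranspose,
      Matrix.conjTranspose_kronecker, hρB.1.1.eq, Matrix.mul_assoc]
  have hY_herm : Y.IsHermitian := hY ▸ hXA.sub (isHermitian_dualMap hE_star hXA')
  set W := Uᴴ * Matrix.reindex e.symm e.symm (XA' ⊗ₖ (1 : Matrix dB' dB' ℂ)) * U
  have hsplit : XA ⊗ₖ (1 : Matrix dB dB ℂ) - W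
      = Y ⊗ₖ (1 : Matrix dB dB ℂ) + (dualMap Emap XA' ⊗ₖ (1 : Matrix dB dB ℂ) - W) := by
    rw [hY, Matrix.sub_kronecker]
    abel
  rw [hsplit, ← qFisher_kronecker_one hρ.1 hρB.1 hρB.2 hY_herm]
  exact sqrt_qFisher_add_le _ _ _

/-- upper bound `Δ ≤ √𝔉_ρ(Y) + √𝔉_{ρ⊗ρ_B}(E†(X_{A'})⊗1 − U†(X_{A'}⊗1)U)`. -/
theorem statement_8
    {dA dB dA' dB' : Type*} [Fintype dA] [DecidableEq dA] [Fintype dB] [DecidableEq dB]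
    [Fintype dA'] [DecidableEq dA'] [Fintype dB'] [DecidableEq dB']
    (e : dA × dB ≃ dA' × dB')
    (U : Matrix (dA × dB) (dA × dB) ℂ) (hU : U * Uᴴ = 1 ∧ Uᴴ * U = 1)
    (ρB : Matrix dB dB ℂ) (hρB : IsState ρB)
    (XA : Matrix dA dA ℂ) (hXA : XA.IsHermitian)
    (XA' : Matrix dA' dA' ℂ) (hXA' : XA'.IsHermitian)
    (Emap : Matrix dA dA ℂ → Matrix dA' dA' ℂ)
    (hE : ∀ τ, Emap τ = ptraceRight (Matrix.reindex e e (U * (τ ⊗ₖ ρB) * Uᴴ)))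
    (Y : Matrix dA dA ℂ) (hY : Y = XA - dualMap Emap XA')
    (ρ : Matrix dA dA ℂ) (hρ : IsState ρ) :
    Real.sqrt (qFisher (ρ ⊗ₖ ρB)
        (XA ⊗ₖ (1 : Matrix dB dB ℂ)
          - Uᴴ * (Matrix.reindex e.symm e.symm (XA' ⊗ₖ (1 : Matrix dB' dB' ℂ))) * U))
      ≤ Real.sqrt (qFisher ρ Y)
        + Real.sqrt (qFisher (ρ ⊗ₖ ρB)
            ((dualMap Emap XA') ⊗ₖ (1 : Matrix dB dB ℂ)
              - Uᴴ * (Matrix.reindex e.symm e.symm (XA' ⊗ₖ (1 : Matrix dB' dB' ℂ))) * U)) :=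
  statement_8_general e U ρB hρB XA hXA XA' hXA' Emap hE Y hY ρ hρ
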